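/- arXiv:1203.3009 — 5 statements merged into one kernel-verified Lean document; each statement's English description precedes it below -/
import Mathlib

section
/- Let R be a commutative ring and n a positive integer. The formal power series ring R⟦x⟧ is n-strongly clean if and only if R is n-strongly clean. -/
/-- `x` is a sum of an idempotent and `n` units, the idempotent commuting with each unit. -/
def IsNStronglyClean {R : Type*} [Ring R] (n : ℕ) (x : R) : Prop :=
  ∃ (e : R) (u : Fin n → Rˣ), IsIdempotentElem e ∧ (∀ i, Commute e (u i)) ∧
    x = e + ∑ i, (u i : R)

/-- A ring is `n`-strongly clean if every element is `n`-strongly clean. -/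
def IsNStronglyCleanRing (R : Type*) [Ring R] (n : ℕ) : Prop :=
  ∀ x : R, IsNStronglyClean n x

/-!
Reduction modulo `X` is a surjective ring map `R⟦X⟧ → R`, so it carries decompositions
`e + u₁ + ⋯ + uₙ` down to `R`. Conversely, lift a decomposition `f(0) = e + u₁ + ⋯ + uₙ` by
constants, keeping `e, u₂, …, uₙ` and replacing `u₁` by `f - e - u₂ - ⋯ - uₙ`: its constant term
is `u₁`, so it is a unit of `R⟦X⟧`.
-/

section

variable {R S : Type*} {n : ℕ}

theorem IsNStronglyClean.map [Ring R] [Ring S] (φ : R →+* S) {x : R}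
    (hx : IsNStronglyClean n x) : IsNStronglyClean n (φ x) := by
  obtain ⟨e, u, he, hcomm, rfl⟩ := hx
  exact ⟨φ e, fun i => Units.map φ.toMonoidHom (u i), he.map φ, fun i => (hcomm i).map φ, by simp⟩

theorem IsNStronglyCleanRing.of_surjective [Ring R] [Ring S] (φ : R →+* S)
    (hφ : Function.Surjective φ) (h : IsNStronglyCleanRing R n) : IsNStronglyCleanRing S n := by
  intro y
  obtain ⟨x, rfl⟩ := hφ y
  exact (h x).map φ

theorem IsNStronglyCleanRing.of_isLocalHom_of_leftInverse [CommRing S] [Ring R]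
    (φ : S →+* R) [IsLocalHom φ] (σ : R →+* S) (hσ : Function.LeftInverse φ σ) (hn : 0 < n)
    (h : IsNStronglyCleanRing R n) : IsNStronglyCleanRing S n := by
  intro f
  obtain ⟨m, rfl⟩ := Nat.exists_eq_succ_of_ne_zero hn.ne'
  obtain ⟨e, u, he, -, hf⟩ := h (φ f)
  set g := f - σ e - ∑ i : Fin m, σ (u i.succ)
  have hg : φ g = u 0 := by
    simp only [g, map_sub, map_sum, hσ _, hf, Fin.sum_univ_succ]
    abel
  have hg_unit : IsUnit g := (isUnit_map_iff φ g).mp (hg ▸ (u 0).isUnit)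
  refine ⟨σ e, Fin.cons hg_unit.unit fun i => Units.map σ (u i.succ), he.map σ,
    fun _ => Commute.all _ _, ?_⟩
  simp only [Fin.sum_univ_succ, Fin.cons_zero, Fin.cons_succ, IsUnit.unit_spec, Units.coe_map,
    MonoidHom.coe_coe, g]
  abel

end

instance PowerSeries.isLocalHom_constantCoeff {R : Type*} [CommRing R] :
    IsLocalHom (PowerSeries.constantCoeff (R := R)) :=
  ⟨fun _ => PowerSeries.isUnit_iff_constantCoeff.mpr⟩

theorem PowerSeries.leftInverse_constantCoeff_C {R : Type*} [CommRing R] :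
    Function.LeftInverse (PowerSeries.constantCoeff (R := R)) (PowerSeries.C (R := R)) :=
  PowerSeries.constantCoeff_C

theorem powerSeries_nStronglyClean_iff {R : Type*} [CommRing R] (n : ℕ) (hn : 0 < n) :
    IsNStronglyCleanRing (PowerSeries R) n ↔ IsNStronglyCleanRing R n :=
  ⟨.of_surjective _ PowerSeries.leftInverse_constantCoeff_C.surjective,
    .of_isLocalHom_of_leftInverse _ _ PowerSeries.leftInverse_constantCoeff_C hn⟩
end

section
/- The ring of integers ℤ is Σ-strongly clean but is not n-strongly clean for any fixed positive integer n. -/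
/-!
Every integer is reached from `0 = 0 + 1 + (-1)` by adding units `±1` one at a time, so it is
`n`-strongly clean for some `n`. Conversely the idempotents `0, 1` and the units `±1` of `ℤ` are
at most `1`, so an `n`-strongly clean integer is at most `n + 1`, and `n + 2` is not one.
-/

theorem isNStronglyClean_two_zero {R : Type*} [Ring R] : IsNStronglyClean 2 (0 : R) :=
  ⟨0, ![1, -1], .zero, fun _ => .zero_left _, by simp⟩

theorem IsNStronglyClean.add_unit {R : Type*} [CommRing R] {n : ℕ} {x : R}
    (h : IsNStronglyClean n x) (v : Rˣ) : IsNStronglyClean (n + 1) (x + v) := by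
  obtain ⟨e, u, he, -, rfl⟩ := h
  refine ⟨e, Fin.cons v u, he, fun _ => .all _ _, ?_⟩
  rw [Fin.sum_univ_succ]
  simp only [Fin.cons_zero, Fin.cons_succ]
  ring

theorem Int.exists_isNStronglyClean (x : ℤ) : ∃ n : ℕ, 0 < n ∧ IsNStronglyClean n x := by
  induction x using Int.induction_on with
  | zero => exact ⟨2, two_pos, isNStronglyClean_two_zero⟩
  | succ i ih =>
    obtain ⟨n, -, h⟩ := ih
    exact ⟨n + 1, n.succ_pos, h.add_unit 1⟩
  | pred i ih =>
    obtain ⟨n, -, h⟩ := ih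
    exact ⟨n + 1, n.succ_pos, h.add_unit (-1)⟩

theorem Int.le_add_one_of_isNStronglyClean {n : ℕ} {x : ℤ} (h : IsNStronglyClean n x) :
    x ≤ n + 1 := by
  obtain ⟨e, u, he, -, rfl⟩ := h
  have he_le : e ≤ 1 := by
    rcases IsIdempotentElem.iff_eq_zero_or_one.mp he with rfl | rfl <;> norm_num
  have hu_le (i : Fin n) : (u i : ℤ) ≤ 1 := (u i : ℤ).le_natAbs.trans_eq (by simp)
  have hsum : ∑ i, (u i : ℤ) ≤ n := by
    simpa using Finset.sum_le_card_nsmul Finset.univ _ 1 fun i _ => hu_le i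
  linarith

theorem int_sigma_strongly_clean_not_n :
    (∀ x : ℤ, ∃ n : ℕ, 0 < n ∧ IsNStronglyClean n x) ∧
      ∀ n : ℕ, 0 < n → ¬ IsNStronglyCleanRing ℤ n := by
  refine ⟨Int.exists_isNStronglyClean, fun n _ h => ?_⟩
  have := Int.le_add_one_of_isNStronglyClean (h (n + 2))
  omega
end

section
/- For any commutative ring R, the polynomial ring R[x] is not Σ-strongly clean; specifically, the element x cannot be written as a sum of an idempotent and finitely many units of R[x]. -/
/-!
An idempotent `e` of a commutative ring is killed by every derivation `D`: from `D e = 2 e D e`,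
multiplying by `e` gives `e D e = 2 e D e`, so `e D e = 0` and then `D e = 0`. For `D = d/dx` on
`R[x]` this says the `x`-coefficient of an idempotent vanishes. Comparing `x`-coefficients in
`x = e + ∑ uᵢ` then writes `1` as the sum of the `x`-coefficients of the units `uᵢ`, which are
nilpotent; so `1` would be nilpotent.
-/

open Polynomial

theorem Derivation.map_isIdempotentElem {R A M : Type*} [CommSemiring R] [CommSemiring A]
    [Algebra R A] [AddCommGroup M] [Module A M] [Module R M] [IsScalarTower R A M]
    (D : Derivation R A M) {e : A} (he : IsIdempotentElem e) : D e = 0 := by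
  have hD : D e = e • D e + e • D e := by rw [← D.leibniz, he.eq]
  have he_smul : e • D e = 0 := by
    simpa [smul_add, smul_smul, he.eq] using congrArg (e • ·) hD
  rw [hD, he_smul, add_zero]

theorem Polynomial.coeff_one_eq_zero_of_isIdempotentElem {R : Type*} [CommRing R] {e : R[X]}
    (he : IsIdempotentElem e) : e.coeff 1 = 0 := by
  simpa [coeff_derivative] using congrArg (coeff · 0) (derivative'.map_isIdempotentElem he)

theorem polynomial_not_sigma_strongly_clean_general {R : Type*} [CommRing R] [Nontrivial R]
    (n : ℕ) (e : Polynomial R) (u : Fin n → (Polynomial R)ˣ)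
    (he : IsIdempotentElem e) :
    Polynomial.X ≠ e + ∑ i, ((u i : Polynomial R)) := by
  intro h
  have h_one : ∑ i, (u i : R[X]).coeff 1 = 1 := by
    simpa [finsetSum_coeff, coeff_one_eq_zero_of_isIdempotentElem he] using
      (congrArg (coeff · 1) h).symm
  refine not_isNilpotent_one (h_one ▸ isNilpotent_sum fun i _ ↦ ?_)
  exact (coeff_isUnit_isNilpotent_of_isUnit (u i).isUnit).2 1 one_ne_zero

theorem polynomial_not_sigma_strongly_clean {R : Type*} [CommRing R] [Nontrivial R]
    (n : ℕ) (e : Polynomial R) (u : Fin n → (Polynomial R)ˣ)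
    (he : IsIdempotentElem e) (hc : ∀ i, Commute e ((u i : Polynomial R))) :
    Polynomial.X ≠ e + ∑ i, ((u i : Polynomial R)) :=
  polynomial_not_sigma_strongly_clean_general n e u he
end

section
/- Let p ≠ 2 be a prime and G a cyclic group of order 3. The group ring ℤ₍ₚ₎G, where ℤ₍ₚ₎ = {m/n ∈ ℚ : gcd(p,n) = 1} is the localization of ℤ at p, is 2-strongly clean: every element is a sum of an idempotent and two units. -/
/-!
Writing `x = a + b ω + c ω²` with `ω³ = 1`, `x` is a unit as soon as its circulant norm
`a³ + b³ + c³ - 3abc` is, since it divides the norm. Over the local ring `ℤ₍ₚ₎` it therefore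
suffices that the norm is nonzero modulo `p`. We show `x = (x - t) + t` for a positive integer `t`
prime to `p` with `N(x - t) ≢ 0 mod p`: as a function of `t`, `N(x - t)` is a cubic with leading
coefficient `-1`, so it cannot vanish at `t = 1, 2, 3, 4` unless `6 ≡ 0`; in characteristic `3` it
is the cube `(a + b + c - t)³`, which cannot vanish at both `t = 1` and `t = 2`.
-/

open MonoidAlgebra

instance intSpanPrime (p : ℕ) [hp : Fact p.Prime] :
    (Ideal.span {(p : ℤ)} : Ideal ℤ).IsPrime := by
  rw [Ideal.span_singleton_prime (by exact_mod_cast hp.out.ne_zero)]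
  exact Nat.prime_iff_prime_int.mp hp.out

section CirculantNorm

variable {R : Type*} [CommRing R]

def circulantNorm (a b c : R) : R := a ^ 3 + b ^ 3 + c ^ 3 - 3 * a * b * c

theorem map_circulantNorm {S : Type*} [CommRing S] (f : R →+* S) (a b c : R) :
    f (circulantNorm a b c) = circulantNorm (f a) (f b) (f c) := by
  simp only [circulantNorm, map_sub, map_add, map_mul, map_pow, map_ofNat]

theorem circulantNorm_eq (a b c : R) :
    circulantNorm a b c = (a + b + c) ^ 3 - 3 * (a + b + c) * (a * b + b * c + c * a) := by
  unfold circulantNorm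
  ring

theorem circulantNorm_sub_third_difference (a b c : R) :
    circulantNorm (a - 1) b c - 3 * circulantNorm (a - 2) b c + 3 * circulantNorm (a - 3) b c
      - circulantNorm (a - 4) b c = 6 := by
  unfold circulantNorm
  ring

theorem mul_circulantAdjugate_eq_circulantNorm {ω : R} (hω : ω ^ 3 = 1) (a b c : R) :
    (a + b * ω + c * ω ^ 2) * (a ^ 2 - b * c + (c ^ 2 - a * b) * ω + (b ^ 2 - a * c) * ω ^ 2)
      = circulantNorm a b c := by
  unfold circulantNorm
  linear_combination (b * (b ^ 2 - a * c) + c * (c ^ 2 - a * b) + c * (b ^ 2 - a * c) * ω) * hω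

theorem isUnit_of_isUnit_circulantNorm {ω : R} (hω : ω ^ 3 = 1) {a b c : R}
    (h : IsUnit (circulantNorm a b c)) : IsUnit (a + b * ω + c * ω ^ 2) :=
  isUnit_of_mul_isUnit_left ((mul_circulantAdjugate_eq_circulantNorm hω a b c).symm ▸ h)

end CirculantNorm

theorem exists_natCast_ne_zero_circulantNorm_sub_ne_zero {k : Type*} [CommRing k] [IsDomain k]
    (h2 : (2 : k) ≠ 0) (a b c : k) :
    ∃ t : ℕ, (t : k) ≠ 0 ∧ circulantNorm (a - t) b c ≠ 0 := by
  by_cases h3 : (3 : k) = 0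
  · have hcube (t : k) : circulantNorm (a - t) b c = (a + b + c - t) ^ 3 := by
      rw [circulantNorm_eq]
      linear_combination (-(a - t + b + c) * ((a - t) * b + b * c + c * (a - t))) * h3
    by_cases hs : a + b + c = 1
    · refine ⟨2, by exact_mod_cast h2, ?_⟩
      rw [hcube, hs]
      norm_num
    · refine ⟨1, by simp, ?_⟩
      rw [hcube]
      exact pow_ne_zero 3 (by simpa [sub_eq_zero] using hs)
  · by_contra! h
    have h4 : (4 : k) ≠ 0 := by
      rw [show (4 : k) = 2 * 2 by norm_num]
      exact mul_ne_zero h2 h2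
    have h6 : (6 : k) ≠ 0 := by
      rw [show (6 : k) = 2 * 3 by norm_num]
      exact mul_ne_zero h2 h3
    have h1 := h 1 (by simp)
    have h2' := h 2 (by exact_mod_cast h2)
    have h3' := h 3 (by exact_mod_cast h3)
    have h4' := h 4 (by exact_mod_cast h4)
    push_cast at h1 h2' h3' h4'
    apply h6
    rw [← circulantNorm_sub_third_difference a b c, h1, h2', h3', h4']
    ring

namespace MonoidAlgebra

variable {R : Type*} [CommRing R]

theorem as_sum_powers_ofAdd_one (x : MonoidAlgebra R (Multiplicative (ZMod 3))) :
    x = algebraMap R _ (x.coeff 1)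
      + algebraMap R _ (x.coeff (.ofAdd 1)) * of R _ (.ofAdd 1)
      + algebraMap R _ (x.coeff (.ofAdd 2)) * of R _ (.ofAdd 1) ^ 2 := by
  have hsq : of R (Multiplicative (ZMod 3)) (.ofAdd 1) ^ 2 = of R _ (.ofAdd 2) := by
    rw [← map_pow]
    rfl
  rw [hsq, ← single_eq_algebraMap_mul_of, ← single_eq_algebraMap_mul_of, coe_algebraMap, Function.comp_apply,
    Algebra.algebraMap_self, RingHom.id_apply]
  ext g
  have hg : g = 1 ∨ g = .ofAdd 1 ∨ g = .ofAdd 2 := by revert g; decide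
  rcases hg with rfl | rfl | rfl <;> simp +decide

theorem exists_eq_unit_add_unit [IsLocalRing R] (h2 : IsUnit (2 : R))
    (x : MonoidAlgebra R (Multiplicative (ZMod 3))) :
    ∃ u₁ u₂ : (MonoidAlgebra R (Multiplicative (ZMod 3)))ˣ, x = u₁ + u₂ := by
  set ω := of R (Multiplicative (ZMod 3)) (.ofAdd 1)
  have hω : ω ^ 3 = 1 := by
    rw [← map_pow]
    rfl
  set π := IsLocalRing.residue R
  have hπ2 : (2 : IsLocalRing.ResidueField R) ≠ 0 := by
    rw [← map_ofNat π 2]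
    exact (IsLocalRing.residue_ne_zero_iff_isUnit 2).2 h2
  obtain ⟨t, ht, hN⟩ := exists_natCast_ne_zero_circulantNorm_sub_ne_zero hπ2
    (π (x.coeff 1)) (π (x.coeff (.ofAdd 1))) (π (x.coeff (.ofAdd 2)))
  have htR : IsUnit (t : R) := by
    rw [← IsLocalRing.residue_ne_zero_iff_isUnit, map_natCast]
    exact ht
  set C := algebraMap R (MonoidAlgebra R (Multiplicative (ZMod 3)))
  have hxt : IsUnit (x - t) := by
    have hN' : IsUnit (circulantNorm (x.coeff 1 - t) (x.coeff (.ofAdd 1)) (x.coeff (.ofAdd 2))) := by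
      rw [← IsLocalRing.residue_ne_zero_iff_isUnit, map_circulantNorm, map_sub, map_natCast]
      exact hN
    have hdecomp : x - t = C (x.coeff 1 - t) + C (x.coeff (.ofAdd 1)) * ω
        + C (x.coeff (.ofAdd 2)) * ω ^ 2 := by
      conv_lhs => rw [as_sum_powers_ofAdd_one x]
      rw [map_sub, map_natCast]
      ring
    rw [hdecomp]
    exact isUnit_of_isUnit_circulantNorm hω (map_circulantNorm C _ _ _ ▸ hN'.map C)
  exact ⟨hxt.unit, (htR.map (algebraMap R _)).unit, by simp⟩

end MonoidAlgebra

theorem isUnit_two_localization_atPrime_span (p : ℕ) [Fact p.Prime] (hp2 : p ≠ 2) :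
    IsUnit (2 : Localization.AtPrime (Ideal.span {(p : ℤ)})) := by
  rw [← map_ofNat (algebraMap ℤ _) 2, IsLocalization.AtPrime.isUnit_to_map_iff _ (Ideal.span {(p : ℤ)})]
  intro (hdvd : 2 ∈ Ideal.span {(p : ℤ)})
  rw [Ideal.mem_span_singleton] at hdvd
  exact hp2 ((Nat.prime_dvd_prime_iff_eq Fact.out Nat.prime_two).1 (by exact_mod_cast hdvd))

theorem zp_c3_two_strongly_clean (p : ℕ) [Fact p.Prime] (hp2 : p ≠ 2)
    (x : MonoidAlgebra (Localization.AtPrime (Ideal.span {(p : ℤ)}))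
      (Multiplicative (ZMod 3))) :
    ∃ (e : MonoidAlgebra (Localization.AtPrime (Ideal.span {(p : ℤ)}))
        (Multiplicative (ZMod 3)))
      (u₁ u₂ : (MonoidAlgebra (Localization.AtPrime (Ideal.span {(p : ℤ)}))
        (Multiplicative (ZMod 3)))ˣ),
      IsIdempotentElem e ∧ x = e + u₁ + u₂ := by
  obtain ⟨u₁, u₂, hx⟩ :=
    MonoidAlgebra.exists_eq_unit_add_unit (isUnit_two_localization_atPrime_span p hp2) x
  exact ⟨0, u₁, u₂, .zero, by rw [zero_add, hx]⟩
end

section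
/- Let R be a ring, e an idempotent, and write ē = 1 − e. If u is a unit of the corner ring eRe with inverse u⁻¹ (relative to identity e), v is a unit of ēRē with inverse v⁻¹ (relative to identity ē), and b ∈ eRē, c ∈ ēRe, then u + b + c + v + cu⁻¹b is a unit of R with inverse u⁻¹ + u⁻¹bv⁻¹cu⁻¹ − u⁻¹bv⁻¹ − v⁻¹cu⁻¹ + v⁻¹. -/
theorem corner_units_combine {R : Type*} [Ring R] (e : R) (he : IsIdempotentElem e)
    (u u' v v' b c : R)
    (hu : e * u * e = u) (hu' : e * u' * e = u')
    (huu' : u * u' = e) (hu'u : u' * u = e)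
    (hv : (1 - e) * v * (1 - e) = v) (hv' : (1 - e) * v' * (1 - e) = v')
    (hvv' : v * v' = 1 - e) (hv'v : v' * v = 1 - e)
    (hb : e * b * (1 - e) = b) (hc : (1 - e) * c * e = c) :
    (u + b + c + v + c * u' * b) *
        (u' + u' * b * v' * c * u' - u' * b * v' - v' * c * u' + v') = 1 ∧
      (u' + u' * b * v' * c * u' - u' * b * v' - v' * c * u' + v') *
        (u + b + c + v + c * u' * b) = 1 := by
  have hee : e * e = e := he
  have ef0 : e * (1 - e) = 0 := by rw [mul_sub, mul_one, hee, sub_self]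
  have fe0 : (1 - e) * e = 0 := by rw [sub_mul, one_mul, hee, sub_self]
  have eu : e * u = u := by rw [← hu, ← mul_assoc, ← mul_assoc, hee]
  have ue : u * e = u := by rw [← hu, mul_assoc, hee]
  have eu' : e * u' = u' := by rw [← hu', ← mul_assoc, ← mul_assoc, hee]
  have u'e : u' * e = u' := by rw [← hu', mul_assoc, hee]
  have ev : e * v = 0 := by rw [← hv, ← mul_assoc, ← mul_assoc, ef0, zero_mul, zero_mul]
  have ve : v * e = 0 := by rw [← hv, mul_assoc, fe0, mul_zero]
  have ev' : e * v' = 0 := by rw [← hv', ← mul_assoc, ← mul_assoc, ef0, zero_mul, zero_mul]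
  have v'e : v' * e = 0 := by rw [← hv', mul_assoc, fe0, mul_zero]
  have eb : e * b = b := by rw [← hb, ← mul_assoc, ← mul_assoc, hee]
  have be : b * e = 0 := by rw [← hb, mul_assoc, fe0, mul_zero]
  have ec : e * c = 0 := by rw [← hc, ← mul_assoc, ← mul_assoc, ef0, zero_mul, zero_mul]
  have ce : c * e = c := by rw [← hc, mul_assoc, hee]
  have uv : u * v = 0 := by rw [← ue, mul_assoc, ev, mul_zero]
  have uv' : u * v' = 0 := by rw [← ue, mul_assoc, ev', mul_zero]
  have uc : u * c = 0 := by rw [← ue, mul_assoc, ec, mul_zero]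
  have u'v : u' * v = 0 := by rw [← u'e, mul_assoc, ev, mul_zero]
  have u'v' : u' * v' = 0 := by rw [← u'e, mul_assoc, ev', mul_zero]
  have u'c : u' * c = 0 := by rw [← u'e, mul_assoc, ec, mul_zero]
  have bu : b * u = 0 := by rw [← eu, ← mul_assoc, be, zero_mul]
  have bu' : b * u' = 0 := by rw [← eu', ← mul_assoc, be, zero_mul]
  have bb : b * b = 0 := by nth_rewrite 2 [← eb]; rw [← mul_assoc, be, zero_mul]
  have vu : v * u = 0 := by rw [← eu, ← mul_assoc, ve, zero_mul]
  have vu' : v * u' = 0 := by rw [← eu', ← mul_assoc, ve, zero_mul]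
  have vb : v * b = 0 := by rw [← eb, ← mul_assoc, ve, zero_mul]
  have cc : c * c = 0 := by nth_rewrite 1 [← ce]; rw [mul_assoc, ec, mul_zero]
  have cv : c * v = 0 := by rw [← ce, mul_assoc, ev, mul_zero]
  have cv' : c * v' = 0 := by rw [← ce, mul_assoc, ev', mul_zero]
  have v'u : v' * u = 0 := by rw [← eu, ← mul_assoc, v'e, zero_mul]
  have v'u' : v' * u' = 0 := by rw [← eu', ← mul_assoc, v'e, zero_mul]
  have v'b : v' * b = 0 := by rw [← eb, ← mul_assoc, v'e, zero_mul]
  have z1 : ∀ x : R, x * u * v = 0 := fun x => by rw [mul_assoc, uv, mul_zero]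
  have z2 : ∀ x : R, x * u * v' = 0 := fun x => by rw [mul_assoc, uv', mul_zero]
  have z3 : ∀ x : R, x * u * c = 0 := fun x => by rw [mul_assoc, uc, mul_zero]
  have z4 : ∀ x : R, x * u' * v = 0 := fun x => by rw [mul_assoc, u'v, mul_zero]
  have z5 : ∀ x : R, x * u' * v' = 0 := fun x => by rw [mul_assoc, u'v', mul_zero]
  have z6 : ∀ x : R, x * u' * c = 0 := fun x => by rw [mul_assoc, u'c, mul_zero]
  have z7 : ∀ x : R, x * b * u = 0 := fun x => by rw [mul_assoc, bu, mul_zero]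
  have z8 : ∀ x : R, x * b * u' = 0 := fun x => by rw [mul_assoc, bu', mul_zero]
  have z9 : ∀ x : R, x * b * b = 0 := fun x => by rw [mul_assoc, bb, mul_zero]
  have z10 : ∀ x : R, x * b * e = 0 := fun x => by rw [mul_assoc, be, mul_zero]
  have z11 : ∀ x : R, x * v * u = 0 := fun x => by rw [mul_assoc, vu, mul_zero]
  have z12 : ∀ x : R, x * v * u' = 0 := fun x => by rw [mul_assoc, vu', mul_zero]
  have z13 : ∀ x : R, x * v * b = 0 := fun x => by rw [mul_assoc, vb, mul_zero]
  have z14 : ∀ x : R, x * v * e = 0 := fun x => by rw [mul_assoc, ve, mul_zero]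
  have z15 : ∀ x : R, x * c * c = 0 := fun x => by rw [mul_assoc, cc, mul_zero]
  have z16 : ∀ x : R, x * c * v = 0 := fun x => by rw [mul_assoc, cv, mul_zero]
  have z17 : ∀ x : R, x * c * v' = 0 := fun x => by rw [mul_assoc, cv', mul_zero]
  have z18 : ∀ x : R, x * e * v = 0 := fun x => by rw [mul_assoc, ev, mul_zero]
  have z19 : ∀ x : R, x * e * v' = 0 := fun x => by rw [mul_assoc, ev', mul_zero]
  have z20 : ∀ x : R, x * e * c = 0 := fun x => by rw [mul_assoc, ec, mul_zero]
  have z21 : ∀ x : R, x * v' * u = 0 := fun x => by rw [mul_assoc, v'u, mul_zero]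
  have z22 : ∀ x : R, x * v' * u' = 0 := fun x => by rw [mul_assoc, v'u', mul_zero]
  have z23 : ∀ x : R, x * v' * b = 0 := fun x => by rw [mul_assoc, v'b, mul_zero]
  have z24 : ∀ x : R, x * v' * e = 0 := fun x => by rw [mul_assoc, v'e, mul_zero]
  have a1 : ∀ x : R, x * e * e = x * e := fun x => by rw [mul_assoc, hee]
  have a2 : ∀ x : R, x * e * u = x * u := fun x => by rw [mul_assoc, eu]
  have a3 : ∀ x : R, x * e * u' = x * u' := fun x => by rw [mul_assoc, eu']
  have a4 : ∀ x : R, x * e * b = x * b := fun x => by rw [mul_assoc, eb]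
  have a5 : ∀ x : R, x * u * e = x * u := fun x => by rw [mul_assoc, ue]
  have a6 : ∀ x : R, x * u' * e = x * u' := fun x => by rw [mul_assoc, u'e]
  have a7 : ∀ x : R, x * c * e = x * c := fun x => by rw [mul_assoc, ce]
  have k1 : ∀ x : R, x * u * u' = x * e := fun x => by rw [mul_assoc, huu']
  have k2 : ∀ x : R, x * u' * u = x * e := fun x => by rw [mul_assoc, hu'u]
  have k3 : ∀ x : R, x * v * v' = x - x * e := fun x => by
    rw [mul_assoc, hvv', mul_sub, mul_one]
  have k4 : ∀ x : R, x * v' * v = x - x * e := fun x => by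
    rw [mul_assoc, hv'v, mul_sub, mul_one]
  have hvv'' : v * v' = 1 - e := hvv'
  have hv'v'' : v' * v = 1 - e := hv'v
  constructor <;>
  · simp only [mul_add, add_mul, mul_sub, sub_mul, ← mul_assoc, huu', hu'u, hvv'', hv'v'',
      hee, eu, ue, eu', u'e, ev, ve, ev', v'e, eb, be, ec, ce,
      uv, uv', uc, u'v, u'v', u'c, bu, bu', bb, vu, vu', vb, cc, cv, cv', v'u, v'u', v'b,
      z1, z2, z3, z4, z5, z6, z7, z8, z9, z10, z11, z12, z13, z14, z15, z16, z17, z18,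
      z19, z20, z21, z22, z23, z24, a1, a2, a3, a4, a5, a6, a7, k1, k2, k3, k4,
      one_mul, mul_one, zero_mul, mul_zero, sub_zero, zero_sub, add_zero, zero_add,
      sub_self, neg_zero]
    noncomm_ring
end
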